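/- arXiv:1611.00989 — 2 statements merged into one kernel-verified Lean document; each statement's English description precedes it below -/
import Mathlib

section
/- (Lagrangian form of the capillary term.) Let n ≥ 2, let X : ℝⁿ → ℝⁿ be a C² diffeomorphism with J(x) = det DX(x) > 0 everywhere, and set A(x) = (DX(x))⁻¹. Let ρ : ℝⁿ → ℝ be C² and k : ℝ → ℝ be C¹, and set ρ̄ = ρ ∘ X. Then for every x ∈ ℝⁿ, ( div[ k(ρ) ∇ρ ⊗ ∇ρ ] )(X(x)) = J(x)⁻¹ div[ k(ρ̄) adj(DX) ( ᵗA ∇ρ̄ ) ⊗ ( ᵗA ∇ρ̄ ) ](x). In particular, if in addition J ≡ 1, then ( div[ k(ρ) ∇ρ ⊗ ∇ρ ] ) ∘ X = div[ k(ρ̄) A ( ᵗA ∇ρ̄ ) ⊗ ( ᵗA ∇ρ̄ ) ]. -/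
/-! In the permutation expansion of `∑ⱼ ∂ⱼ adj(DX)ⱼc`, the term carrying `∂ⱼ∂ₘX_{σ m}` cancels
against the one indexed by `σ ∘ (j m)`, which has the opposite sign and, by the symmetry of second
derivatives, the same value: the rows of the cofactor matrix of a Jacobian are divergence free
(Piola identity). With the product and chain rules this gives
`div (adj(DX) (F ∘ X)) = det DX · (div F) ∘ X` for every vector field `F`. Apply it to the columns
of `k(ρ) ∇ρ ⊗ ∇ρ`, using `ᵗA ∇ρ̄ = (∇ρ) ∘ X`; when `J ≡ 1`, `A = adj(DX)`. -/

/-- Partial derivative `∂ᵢ f` of a scalar function at a point `x`. -/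
noncomputable def pd {n : ℕ} (i : Fin n) (f : (Fin n → ℝ) → ℝ) (x : Fin n → ℝ) : ℝ :=
  fderiv ℝ f x (Pi.single i 1)

/-- Gradient of a scalar function. -/
noncomputable def grad {n : ℕ} (f : (Fin n → ℝ) → ℝ) (x : Fin n → ℝ) : Fin n → ℝ :=
  fun i => pd i f x

/-- Laplacian of a scalar function. -/
noncomputable def lap {n : ℕ} (f : (Fin n → ℝ) → ℝ) (x : Fin n → ℝ) : ℝ :=
  ∑ i, pd i (pd i f) x

/-- Squared euclidean norm of the gradient, `|∇f|² = ∑ᵢ (∂ᵢf)²`. -/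
noncomputable def gradNormSq {n : ℕ} (f : (Fin n → ℝ) → ℝ) (x : Fin n → ℝ) : ℝ :=
  ∑ i, (pd i f x) ^ 2

/-- Divergence of a matrix-valued field: `(matDiv M x)ᵢ = ∑ⱼ ∂ⱼ Mⱼᵢ`. -/
noncomputable def matDiv {n : ℕ} (M : (Fin n → ℝ) → Matrix (Fin n) (Fin n) ℝ)
    (x : Fin n → ℝ) : Fin n → ℝ :=
  fun i => ∑ j, pd j (fun y => M y j i) x

/-- Divergence of a vector field: `vecDiv F x = ∑ᵢ ∂ᵢ Fᵢ`. -/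
noncomputable def vecDiv {n : ℕ} (F : (Fin n → ℝ) → (Fin n → ℝ)) (x : Fin n → ℝ) : ℝ :=
  ∑ i, pd i (fun y => F y i) x

/-- Jacobian matrix of a vector field: `(jacM F x)ᵢⱼ = ∂ⱼ Fᵢ`. -/
noncomputable def jacM {n : ℕ} (F : (Fin n → ℝ) → (Fin n → ℝ)) (x : Fin n → ℝ) :
    Matrix (Fin n) (Fin n) ℝ :=
  Matrix.of fun i j => pd j (fun y => F y i) x

open Matrix Finset Equiv

lemma Matrix.adjugate_apply_eq_sum_perm {ι R : Type*} [Fintype ι] [DecidableEq ι] [CommRing R]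
    (A : Matrix ι ι R) (j c : ι) :
    A.adjugate j c = ∑ σ : Perm ι,
      (if σ j = c then ((Perm.sign σ : ℤ) : R) else 0) * ∏ a ∈ univ.erase j, A (σ a) a := by
  rw [adjugate_apply, det_apply']
  refine sum_congr rfl fun σ _ => ?_
  split_ifs with h
  · rw [← mul_prod_erase univ _ (mem_univ j), h, updateRow_self, Pi.single_eq_same, one_mul]
    refine congrArg _ (prod_congr rfl fun a ha => ?_)
    rw [updateRow_ne fun hc => (mem_erase.1 ha).1 (σ.injective (hc.trans h.symm))]
  · have hj : σ.symm c ≠ j := fun hj => h (by rw [← hj, apply_symm_apply])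
    rw [zero_mul, prod_eq_zero (mem_univ (σ.symm c)) (by simp [Pi.single_eq_of_ne hj]), mul_zero]

lemma Matrix.trace_adjugate_mul_mul {ι R : Type*} [Fintype ι] [DecidableEq ι] [CommRing R]
    (A B : Matrix ι ι R) : (A.adjugate * (B * A)).trace = A.det * B.trace := by
  rw [← Matrix.mul_assoc, trace_mul_cycle, mul_adjugate, smul_mul, Matrix.one_mul, trace_smul,
    smul_eq_mul]

lemma Matrix.mul_vecMulVec_apply_eq_mulVec {ι R : Type*} [Fintype ι] [CommRing R]
    (B : Matrix ι ι R) (u : ι → R) (s : R) (j i : ι) :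
    s * (B * vecMulVec u u) j i = (B *ᵥ fun a => s * u a * u i) j := by
  simp only [mul_apply, vecMulVec_apply, mulVec, dotProduct, mul_sum]
  exact sum_congr rfl fun c _ => by ring

lemma sum_sum_sum_erase_eq_zero_of_swap {ι M : Type*} [Fintype ι] [DecidableEq ι]
    [AddCommGroup M] (f : ι → Perm ι → ι → M)
    (hf : ∀ j σ m, j ≠ m → f m (σ * swap j m) j = -f j σ m) :
    ∑ j, ∑ σ, ∑ m ∈ univ.erase j, f j σ m = 0 := by
  let g : ι × Perm ι × ι → M := fun p => if p.1 ≠ p.2.2 then f p.1 p.2.1 p.2.2 else 0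
  have hg : ∑ j, ∑ σ, ∑ m ∈ univ.erase j, f j σ m = ∑ p, g p := by
    simp only [← filter_ne, sum_filter, g, Fintype.sum_prod_type]
  rw [hg]
  refine sum_ninvolution (fun p => (p.2.2, p.2.1 * swap p.1 p.2.2, p.1)) ?_ ?_
    (fun _ => mem_univ _) ?_
  · rintro ⟨j, σ, m⟩
    by_cases hjm : j = m
    · simp [g, hjm]
    · simp [g, hjm, Ne.symm hjm, hf j σ m hjm]
  · rintro ⟨j, σ, m⟩ hne
    have hjm : j ≠ m := fun h => hne (by simp [g, h])
    simp [hjm]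
  · rintro ⟨j, σ, m⟩
    simp [swap_comm m j, mul_assoc]

lemma differentiableAt_adjugate_apply {𝕜 E ι : Type*} [NontriviallyNormedField 𝕜]
    [NormedAddCommGroup E] [NormedSpace 𝕜 E] [Fintype ι] [DecidableEq ι]
    {M : E → Matrix ι ι 𝕜} {x : E} (hM : ∀ a b, DifferentiableAt 𝕜 (fun y => M y a b) x)
    (j c : ι) : DifferentiableAt 𝕜 (fun y => (M y).adjugate j c) x := by
  simp only [adjugate_apply_eq_sum_perm]
  fun_prop

section

variable {n : ℕ}

section PartialDerivatives

variable {f g : (Fin n → ℝ) → ℝ} {x : Fin n → ℝ}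

lemma contDiff_pd (hf : ContDiff ℝ 2 f) (i : Fin n) : ContDiff ℝ 1 (pd i f) :=
  (hf.fderiv_right (m := 1) (by norm_num)).clm_apply contDiff_const

lemma pd_pd_comm (hf : ContDiff ℝ 2 f) (i j : Fin n) (x : Fin n → ℝ) :
    pd i (pd j f) x = pd j (pd i f) x := by
  have hd : DifferentiableAt ℝ (fderiv ℝ f) x :=
    (hf.fderiv_right (m := 1) (by norm_num)).differentiable one_ne_zero x
  have happly : ∀ v w, fderiv ℝ (fun y => fderiv ℝ f y v) x w = fderiv ℝ (fderiv ℝ f) x w v :=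
    fun v w => by rw [fderiv_clm_apply hd (differentiableAt_const v)]; simp
  change fderiv ℝ (fun y => fderiv ℝ f y (Pi.single j 1)) x (Pi.single i 1)
    = fderiv ℝ (fun y => fderiv ℝ f y (Pi.single i 1)) x (Pi.single j 1)
  rw [happly, happly, hf.contDiffAt.isSymmSndFDerivAt (by simp)]

lemma pd_sum {ι : Type*} {s : Finset ι} {F : ι → (Fin n → ℝ) → ℝ}
    (hF : ∀ c ∈ s, DifferentiableAt ℝ (F c) x) (j : Fin n) :
    pd j (fun y => ∑ c ∈ s, F c y) x = ∑ c ∈ s, pd j (F c) x := by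
  simp [pd, fderiv_fun_sum hF]

lemma pd_mul (hf : DifferentiableAt ℝ f x) (hg : DifferentiableAt ℝ g x) (j : Fin n) :
    pd j (fun y => f y * g y) x = pd j f x * g x + f x * pd j g x := by
  simp only [pd, fderiv_fun_mul hf hg, _root_.add_apply, _root_.smul_apply, smul_eq_mul]
  ring

lemma pd_const_mul (hf : DifferentiableAt ℝ f x) (c : ℝ) (j : Fin n) :
    pd j (fun y => c * f y) x = c * pd j f x := by
  simp [pd, fderiv_const_mul hf]

lemma pd_prod {ι : Type*} [DecidableEq ι] {s : Finset ι} {F : ι → (Fin n → ℝ) → ℝ}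
    (hF : ∀ c ∈ s, DifferentiableAt ℝ (F c) x) (j : Fin n) :
    pd j (fun y => ∏ c ∈ s, F c y) x = ∑ c ∈ s, (∏ b ∈ s.erase c, F b x) * pd j (F c) x := by
  simp [pd, (HasFDerivAt.finsetProd fun c hc => (hF c hc).hasFDerivAt).fderiv]

end PartialDerivatives

lemma jacM_eq_toMatrix' {F : (Fin n → ℝ) → Fin n → ℝ} {x : Fin n → ℝ}
    (hF : DifferentiableAt ℝ F x) :
    jacM F x = LinearMap.toMatrix' (fderiv ℝ F x : (Fin n → ℝ) →ₗ[ℝ] Fin n → ℝ) := by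
  ext i j
  simp [jacM, pd, (hasFDerivAt_pi'.1 hF.hasFDerivAt i).fderiv, LinearMap.toMatrix'_apply]

lemma jacM_comp {F X : (Fin n → ℝ) → Fin n → ℝ} {x : Fin n → ℝ}
    (hF : DifferentiableAt ℝ F (X x)) (hX : DifferentiableAt ℝ X x) :
    jacM (fun y => F (X y)) x = jacM F (X x) * jacM X x := by
  rw [jacM_eq_toMatrix' (F := fun y => F (X y)) (hF.comp x hX), jacM_eq_toMatrix' hF,
    jacM_eq_toMatrix' hX, ← LinearMap.toMatrix'_mul, fderiv_fun_comp x hF hX]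
  rfl

lemma grad_comp {f : (Fin n → ℝ) → ℝ} {X : (Fin n → ℝ) → Fin n → ℝ} {x : Fin n → ℝ}
    (hf : DifferentiableAt ℝ f (X x)) (hX : DifferentiableAt ℝ X x) :
    grad (fun y => f (X y)) x = (jacM X x)ᵀ *ᵥ grad f (X x) := by
  ext a
  have hcol : fderiv ℝ X x (Pi.single a 1) = fun l => jacM X x l a := by
    ext l; simp [jacM_eq_toMatrix' hX, LinearMap.toMatrix'_apply]
  rw [grad, pd, fderiv_fun_comp x hf hX, ContinuousLinearMap.comp_apply, hcol,
    ← univ_sum_single (fun l => jacM X x l a)]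
  simp only [map_sum, mulVec, dotProduct, grad, pd, transpose_apply]
  refine sum_congr rfl fun l _ => ?_
  rw [← smul_eq_mul, ← map_smul, ← Pi.single_smul', smul_eq_mul, mul_one]

lemma inv_transpose_jacM_mulVec_grad_comp {f : (Fin n → ℝ) → ℝ}
    {X : (Fin n → ℝ) → Fin n → ℝ} {x : Fin n → ℝ}
    (hf : DifferentiableAt ℝ f (X x)) (hX : DifferentiableAt ℝ X x) (hdet : (jacM X x).det ≠ 0) :
    ((jacM X x)⁻¹)ᵀ *ᵥ grad (fun y => f (X y)) x = grad f (X x) := by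
  rw [grad_comp hf hX, mulVec_mulVec, transpose_nonsing_inv,
    nonsing_inv_mul _ (by rwa [det_transpose, isUnit_iff_ne_zero]), one_mulVec]

lemma contDiff_jacM_apply {X : (Fin n → ℝ) → Fin n → ℝ} (hX : ContDiff ℝ 2 X) (a b : Fin n) :
    ContDiff ℝ 1 (fun y => jacM X y a b) :=
  contDiff_pd (contDiff_pi.1 hX a) b

lemma matDiv_adjugate_jacM {X : (Fin n → ℝ) → Fin n → ℝ} (hX : ContDiff ℝ 2 X)
    (x : Fin n → ℝ) :
    matDiv (fun y => (jacM X y).adjugate) x = 0 := by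
  ext c
  have hB : ∀ a b y, DifferentiableAt ℝ (fun y => jacM X y a b) y := fun a b =>
    (contDiff_jacM_apply hX a b).differentiable one_ne_zero
  let T : Fin n → Perm (Fin n) → Fin n → ℝ := fun j σ m =>
    (if σ j = c then ((Perm.sign σ : ℤ) : ℝ) else 0) *
      ((∏ b ∈ (univ.erase j).erase m, jacM X x (σ b) b) * pd j (fun y => jacM X y (σ m) m) x)
  have hexpand : ∀ j,
      pd j (fun y => (jacM X y).adjugate j c) x = ∑ σ, ∑ m ∈ univ.erase j, T j σ m := by
    intro j
    simp only [adjugate_apply_eq_sum_perm]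
    rw [pd_sum (fun σ _ => by fun_prop)]
    refine sum_congr rfl fun σ _ => ?_
    rw [pd_const_mul (by fun_prop), pd_prod (fun a _ => hB _ _ x), mul_sum]
  have hswap : ∀ j σ m, j ≠ m → T m (σ * swap j m) j = -T j σ m := by
    intro j σ m hjm
    have hprod : ∏ b ∈ (univ.erase m).erase j, jacM X x ((σ * swap j m) b) b
        = ∏ b ∈ (univ.erase j).erase m, jacM X x (σ b) b := by
      rw [erase_right_comm]
      refine prod_congr rfl fun b hb => ?_
      simp only [mem_erase] at hb
      rw [Perm.mul_apply, swap_apply_of_ne_of_ne hb.2.1 hb.1]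
    have hschwarz : pd m (fun y => jacM X y (σ m) j) x = pd j (fun y => jacM X y (σ m) m) x :=
      pd_pd_comm (contDiff_pi.1 hX (σ m)) m j x
    simp only [T]
    rw [hprod]
    simp only [Perm.mul_apply, swap_apply_left, swap_apply_right, Perm.sign_mul,
      Perm.sign_swap hjm, hschwarz]
    split_ifs <;> push_cast <;> ring
  simp only [matDiv, hexpand]
  exact sum_sum_sum_erase_eq_zero_of_swap T hswap

lemma vecDiv_mulVec {B : (Fin n → ℝ) → Matrix (Fin n) (Fin n) ℝ} {G : (Fin n → ℝ) → Fin n → ℝ}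
    {x : Fin n → ℝ} (hB : ∀ a b, DifferentiableAt ℝ (fun y => B y a b) x)
    (hG : DifferentiableAt ℝ G x) :
    vecDiv (fun y => B y *ᵥ G y) x = matDiv B x ⬝ᵥ G x + (B x * jacM G x).trace := by
  have hGc : ∀ c, DifferentiableAt ℝ (fun y => G y c) x := differentiableAt_pi.1 hG
  have hterm : ∀ j, pd j (fun y => (B y *ᵥ G y) j) x
      = ∑ c, (pd j (fun y => B y j c) x * G x c + B x j c * jacM G x c j) := fun j => by
    simp only [mulVec, dotProduct]
    rw [pd_sum (F := fun c y => B y j c * G y c) fun c _ => (hB j c).mul (hGc c)]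
    exact sum_congr rfl fun c _ => pd_mul (hB j c) (hGc c) j
  simp only [vecDiv, hterm, sum_add_distrib, trace, Matrix.diag, mul_apply, matDiv, dotProduct,
    sum_mul]
  rw [sum_comm]

lemma vecDiv_adjugate_jacM_mulVec_comp {X F : (Fin n → ℝ) → Fin n → ℝ} {x : Fin n → ℝ}
    (hX : ContDiff ℝ 2 X) (hF : DifferentiableAt ℝ F (X x)) :
    vecDiv (fun y => (jacM X y).adjugate *ᵥ F (X y)) x = (jacM X x).det * vecDiv F (X x) := by
  have hXx : DifferentiableAt ℝ X x := hX.differentiable (by norm_num) x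
  rw [vecDiv_mulVec (G := fun y => F (X y)) (differentiableAt_adjugate_apply fun a b =>
      (contDiff_jacM_apply hX a b).differentiable one_ne_zero x) (hF.comp x hXx),
    matDiv_adjugate_jacM hX, zero_dotProduct, zero_add, jacM_comp hF hXx,
    trace_adjugate_mul_mul]
  rfl

end

theorem capillary_term_lagrangian_general {n : ℕ}
    (e : (Fin n → ℝ) ≃ (Fin n → ℝ))
    (hX : ContDiff ℝ 2 ⇑e)
    (hJ : ∀ x, 0 < (jacM (⇑e) x).det)
    (ρ : (Fin n → ℝ) → ℝ) (hρ : ContDiff ℝ 2 ρ)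
    (k : ℝ → ℝ) (hk : ContDiff ℝ 1 k) :
    (∀ x : Fin n → ℝ, ∀ i : Fin n,
      matDiv (fun z => Matrix.of fun a b => k (ρ z) * pd a ρ z * pd b ρ z) (e x) i
        = ((jacM (⇑e) x).det)⁻¹ *
            ∑ j, pd j (fun y => k (ρ (e y)) *
              ((jacM (⇑e) y).adjugate *
                Matrix.vecMulVec
                  (Matrix.mulVec (Matrix.transpose ((jacM (⇑e) y)⁻¹))
                    (fun a => pd a (fun z => ρ (e z)) y))
                  (Matrix.mulVec (Matrix.transpose ((jacM (⇑e) y)⁻¹))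
                    (fun a => pd a (fun z => ρ (e z)) y))) j i) x)
    ∧ ((∀ y, (jacM (⇑e) y).det = 1) →
        ∀ x : Fin n → ℝ, ∀ i : Fin n,
        matDiv (fun z => Matrix.of fun a b => k (ρ z) * pd a ρ z * pd b ρ z) (e x) i
          = ∑ j, pd j (fun y => k (ρ (e y)) *
              ((jacM (⇑e) y)⁻¹ *
                Matrix.vecMulVec
                  (Matrix.mulVec (Matrix.transpose ((jacM (⇑e) y)⁻¹))
                    (fun a => pd a (fun z => ρ (e z)) y))
                  (Matrix.mulVec (Matrix.transpose ((jacM (⇑e) y)⁻¹))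
                    (fun a => pd a (fun z => ρ (e z)) y))) j i) x) := by
  let flux : Fin n → (Fin n → ℝ) → Fin n → ℝ := fun i z a => k (ρ z) * pd a ρ z * pd i ρ z
  have hflux : ∀ i z, DifferentiableAt ℝ (flux i) z := fun i z =>
    differentiableAt_pi.2 fun a => ((((hk.comp (hρ.of_le (by norm_num))).mul
      (contDiff_pd hρ a)).mul (contDiff_pd hρ i)).differentiable one_ne_zero) z
  have hlagrangian : ∀ x i, matDiv (fun z => Matrix.of fun a b => k (ρ z) * pd a ρ z * pd b ρ z)
      (e x) i = ((jacM e x).det)⁻¹ * ∑ j, pd j (fun y => k (ρ (e y)) * ((jacM e y).adjugate *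
        vecMulVec (((jacM e y)⁻¹)ᵀ *ᵥ grad (fun z => ρ (e z)) y)
          (((jacM e y)⁻¹)ᵀ *ᵥ grad (fun z => ρ (e z)) y)) j i) x := by
    intro x i
    rw [show matDiv _ (e x) i = vecDiv (flux i) (e x) from rfl,
      ← inv_mul_cancel_left₀ (hJ x).ne' (vecDiv (flux i) (e x)),
      ← vecDiv_adjugate_jacM_mulVec_comp hX (hflux i (e x))]
    congr 1
    refine sum_congr rfl fun j _ => congrArg (pd j · x) (funext fun y => ?_)
    rw [inv_transpose_jacM_mulVec_grad_comp (hρ.differentiable (by norm_num) _)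
      (hX.differentiable (by norm_num) y) (hJ y).ne', mul_vecMulVec_apply_eq_mulVec]
    rfl
  refine ⟨hlagrangian, fun hdet x i => ?_⟩
  have hinv : ∀ y, (jacM e y)⁻¹ = (jacM e y).adjugate := fun y => by
    rw [Matrix.inv_def, hdet, Ring.inverse_one, one_smul]
  have h := hlagrangian x i
  simp only [hinv, hdet, inv_one, one_mul] at h ⊢
  exact h

/-- Lagrangian form of the capillary term: for a C² diffeomorphism
`X` with positive Jacobian `J`, `A = (DX)⁻¹`, `ρ̄ = ρ ∘ X`,
`(div[k(ρ)∇ρ⊗∇ρ])(X x) = J⁻¹ div[k(ρ̄) adj(DX) (ᵗA∇ρ̄)⊗(ᵗA∇ρ̄)](x)`;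
if moreover `J ≡ 1` then
`(div[k(ρ)∇ρ⊗∇ρ]) ∘ X = div[k(ρ̄) A (ᵗA∇ρ̄)⊗(ᵗA∇ρ̄)]`. -/
theorem capillary_term_lagrangian {n : ℕ} (hn : 2 ≤ n)
    (e : (Fin n → ℝ) ≃ (Fin n → ℝ))
    (hX : ContDiff ℝ 2 ⇑e) (hXinv : ContDiff ℝ 2 ⇑e.symm)
    (hJ : ∀ x, 0 < (jacM (⇑e) x).det)
    (ρ : (Fin n → ℝ) → ℝ) (hρ : ContDiff ℝ 2 ρ)
    (k : ℝ → ℝ) (hk : ContDiff ℝ 1 k) :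
    (∀ x : Fin n → ℝ, ∀ i : Fin n,
      matDiv (fun z => Matrix.of fun a b => k (ρ z) * pd a ρ z * pd b ρ z) (e x) i
        = ((jacM (⇑e) x).det)⁻¹ *
            ∑ j, pd j (fun y => k (ρ (e y)) *
              ((jacM (⇑e) y).adjugate *
                Matrix.vecMulVec
                  (Matrix.mulVec (Matrix.transpose ((jacM (⇑e) y)⁻¹))
                    (fun a => pd a (fun z => ρ (e z)) y))
                  (Matrix.mulVec (Matrix.transpose ((jacM (⇑e) y)⁻¹))
                    (fun a => pd a (fun z => ρ (e z)) y))) j i) x)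
    ∧ ((∀ y, (jacM (⇑e) y).det = 1) →
        ∀ x : Fin n → ℝ, ∀ i : Fin n,
        matDiv (fun z => Matrix.of fun a b => k (ρ z) * pd a ρ z * pd b ρ z) (e x) i
          = ∑ j, pd j (fun y => k (ρ (e y)) *
              ((jacM (⇑e) y)⁻¹ *
                Matrix.vecMulVec
                  (Matrix.mulVec (Matrix.transpose ((jacM (⇑e) y)⁻¹))
                    (fun a => pd a (fun z => ρ (e z)) y))
                  (Matrix.mulVec (Matrix.transpose ((jacM (⇑e) y)⁻¹))
                    (fun a => pd a (fun z => ρ (e z)) y))) j i) x) :=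
  capillary_term_lagrangian_general e hX hJ ρ hρ k hk
end

section
/- Let n ≥ 2, T > 0, and let v̄ : [0,T] × ℝⁿ → ℝⁿ be continuous and twice continuously differentiable with respect to x, with all spatial derivatives up to order 2 continuous on [0,T] × ℝⁿ. Define X_v̄(t,x) = x + ∫₀ᵗ v̄(τ,x) dτ. Then for every (t,x) ∈ [0,T] × ℝⁿ the Jacobian determinant J_v̄(t,x) = det DₓX_v̄(t,x) is differentiable in t and satisfies ∂ₜ J_v̄(t,x) = div( adj(DₓX_v̄(t,·)) v̄(t,·) )(x), where adj(DₓX_v̄) v̄ is the pointwise matrix–vector product. Consequently, if div( adj(DₓX_v̄(t,·)) v̄(t,·) ) ≡ 0 on [0,T] × ℝⁿ, then J_v̄ ≡ 1, i.e. X_v̄(t,·) has unit Jacobian determinant for all t. -/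
/-!
Differentiating under the integral sign, `DₓX(t) = I + ∫₀ᵗ Dv̄`, so `∂ₜ DₓX = Dv̄` and Jacobi's
formula gives `∂ₜ det DₓX = tr (adj (DₓX) Dv̄)`. By the product rule,
`div (adj (DₓX) v̄) = tr (adj (DₓX) Dv̄) + ∑ⱼ v̄ⱼ ∑ᵢ ∂ᵢ adj (DₓX)ᵢⱼ`, and the last sum vanishes
by the Piola identity, since `∂_r (DₓX)_{pq} = ∂_r ∂_q X_p` is symmetric in `q, r`. Expanding the
adjugate over permutations, the Piola identity is the cancellation of the terms indexed by
`(i, l)` and `(l, i)` under `σ ↦ σ * swap i l`. Finally, a vanishing divergence makes `det DₓX`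
constant in `t`, equal to its value `1` at `t = 0`.
-/

open scoped BigOperators
open MeasureTheory

/-- The Lagrangian flow map `X_v̄(t,x) = x + ∫₀ᵗ v̄(τ,x) dτ`. -/
noncomputable def lagFlow {n : ℕ} (v : ℝ → (Fin n → ℝ) → (Fin n → ℝ))
    (t : ℝ) (x : Fin n → ℝ) : Fin n → ℝ :=
  x + ∫ τ in (0 : ℝ)..t, v τ x

open Finset Equiv

theorem Finset.sum_sum_erase_eq_zero_of_antisymm {ι M : Type*} [Fintype ι] [DecidableEq ι]
    [AddCommGroup M] (f : ι → ι → M) (hf : ∀ i l, i ≠ l → f l i = -f i l) :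
    ∑ i, ∑ l ∈ univ.erase i, f i l = 0 := by
  have hrewrite : ∀ i, ∑ l ∈ univ.erase i, f i l = ∑ l, if i = l then 0 else f i l := by
    intro i
    rw [sum_ite, sum_const_zero, zero_add, filter_ne]
  simp_rw [hrewrite, ← Fintype.sum_prod_type']
  refine sum_ninvolution Prod.swap (fun p => ?_) (fun p hp => ?_) (fun _ => mem_univ _)
    Prod.swap_swap
  · by_cases h : p.1 = p.2
    · simp [h]
    · simp [h, Ne.symm h, hf p.1 p.2 h]
  · intro hswap
    have hdiag : p.1 = p.2 := congrArg Prod.snd hswap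
    exact hp (if_pos hdiag)

namespace Matrix

variable {ι R : Type*} [Fintype ι] [DecidableEq ι] [CommRing R]

theorem adjugate_apply_eq_sum_perm_s17 (M : Matrix ι ι R) (i j : ι) :
    M.adjugate i j = ∑ σ : Perm ι with σ i = j,
      ((Perm.sign σ : ℤ) : R) * ∏ k ∈ univ.erase i, M (σ k) k := by
  rw [adjugate_apply, det_apply', ← sum_filter_add_sum_filter_not univ (fun σ : Perm ι => σ i = j)]
  have hvanish : ∑ σ : Perm ι with ¬σ i = j,
      ((Perm.sign σ : ℤ) : R) * ∏ k, (M.updateRow j (Pi.single i 1)) (σ k) k = 0 := by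
    refine sum_eq_zero fun σ hσ => mul_eq_zero_of_right _ (prod_eq_zero (mem_univ (σ.symm j)) ?_)
    have hne : σ.symm j ≠ i := fun h => (mem_filter.1 hσ).2 (by rw [← h, Equiv.apply_symm_apply])
    rw [Equiv.apply_symm_apply, updateRow_self, Pi.single_apply, if_neg hne]
  rw [hvanish, add_zero]
  refine sum_congr rfl fun σ hσ => ?_
  have hσi : σ i = j := (mem_filter.1 hσ).2
  rw [← mul_prod_erase univ _ (mem_univ i), hσi, updateRow_self, Pi.single_eq_same, one_mul]
  refine congrArg _ (prod_congr rfl fun k hk => ?_)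
  rw [updateRow_ne fun h => (mem_erase.1 hk).1 (σ.injective (h.trans hσi.symm))]

theorem trace_adjugate_mul_eq_sum_perm (M H : Matrix ι ι R) :
    trace (M.adjugate * H) = ∑ σ : Perm ι,
      ((Perm.sign σ : ℤ) : R) * ∑ i, (∏ k ∈ univ.erase i, M (σ k) k) * H (σ i) i := by
  simp only [trace, diag, mul_apply, adjugate_apply_eq_sum_perm_s17, sum_mul, mul_sum]
  conv_rhs => rw [sum_comm]
  refine sum_congr rfl fun i _ => ?_
  rw [← sum_fiberwise univ (fun σ : Perm ι => σ i)]
  refine sum_congr rfl fun j _ => sum_congr rfl fun σ hσ => ?_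
  rw [(mem_filter.1 hσ).2]
  ring

/-- The derivative of the entry `(i, j)` of the adjugate at `M` in the direction `D`. -/
def adjugateDeriv (M D : Matrix ι ι R) (i j : ι) : R :=
  ∑ σ : Perm ι with σ i = j, ((Perm.sign σ : ℤ) : R) *
    ∑ l ∈ univ.erase i, (∏ k ∈ (univ.erase i).erase l, M (σ k) k) * D (σ l) l

theorem adjugateDeriv_swap_eq_neg (M : Matrix ι ι R) (B : ι → Matrix ι ι R)
    (hB : ∀ r p q, B r p q = B q p r) (j : ι) {i l : ι} (hil : i ≠ l) :
    ∑ σ : Perm ι with σ l = j, ((Perm.sign σ : ℤ) : R) *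
      ((∏ k ∈ (univ.erase l).erase i, M (σ k) k) * B l (σ i) i) =
    -∑ σ : Perm ι with σ i = j, ((Perm.sign σ : ℤ) : R) *
      ((∏ k ∈ (univ.erase i).erase l, M (σ k) k) * B i (σ l) l) := by
  rw [← sum_neg_distrib]
  refine sum_equiv (Equiv.mulRight (Equiv.swap i l)) (fun σ => ?_) (fun σ _ => ?_)
  · simp
  · simp only [coe_mulRight, Perm.mul_apply, swap_apply_right, Perm.sign_mul,
      Perm.sign_swap hil]
    rw [hB l, erase_right_comm, prod_congr rfl fun k hk => ?_]
    · push_cast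
      ring
    · rw [swap_apply_of_ne_of_ne (mem_erase.1 (mem_erase.1 hk).2).1 (mem_erase.1 hk).1]

/-- The Piola identity `∑ᵢ ∂ᵢ (adj A)ᵢⱼ = 0` at a point, with `M = A x` and `B r = ∂ᵣ A`; the
symmetry of `B` holds when `A` is a Jacobian matrix. -/
theorem sum_adjugateDeriv_eq_zero (M : Matrix ι ι R) (B : ι → Matrix ι ι R)
    (hB : ∀ r p q, B r p q = B q p r) (j : ι) :
    ∑ i, adjugateDeriv M (B i) i j = 0 := by
  simp only [adjugateDeriv, mul_sum]
  simp_rw [sum_comm (s := univ.filter _)]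
  exact sum_sum_erase_eq_zero_of_antisymm _ fun i l hil => adjugateDeriv_swap_eq_neg M B hB j hil

end Matrix

open Matrix

theorem HasDerivWithinAt.matrix_det {𝕜 ι : Type*} [NontriviallyNormedField 𝕜] [Fintype ι]
    [DecidableEq ι] {A : 𝕜 → Matrix ι ι 𝕜} {A' : Matrix ι ι 𝕜} {s : Set 𝕜} {t : 𝕜}
    (hA : ∀ i j, HasDerivWithinAt (fun u => A u i j) (A' i j) s t) :
    HasDerivWithinAt (fun u => (A u).det) (trace ((A t).adjugate * A')) s t := by
  simp_rw [det_apply', trace_adjugate_mul_eq_sum_perm]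
  refine HasDerivWithinAt.fun_sum fun σ _ => ?_
  simpa only [smul_eq_mul] using
    (HasDerivWithinAt.fun_finsetProd fun k _ => hA (σ k) k).const_mul _

theorem hasFDerivAt_adjugate_apply {𝕜 E ι : Type*} [NontriviallyNormedField 𝕜]
    [NormedAddCommGroup E] [NormedSpace 𝕜 E] [Fintype ι] [DecidableEq ι] {A : E → Matrix ι ι 𝕜}
    {x : E} (hA : ∀ p q, DifferentiableAt 𝕜 (fun y => A y p q) x) (i j : ι) :
    HasFDerivAt (fun y => (A y).adjugate i j)
      (∑ σ : Perm ι with σ i = j, ((Perm.sign σ : ℤ) : 𝕜) •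
        ∑ l ∈ univ.erase i, (∏ k ∈ (univ.erase i).erase l, A x (σ k) k) •
          fderiv 𝕜 (fun y => A y (σ l) l) x) x := by
  simp_rw [adjugate_apply_eq_sum_perm_s17]
  refine HasFDerivAt.fun_sum fun σ _ => ?_
  exact (HasFDerivAt.finsetProd fun k _ => (hA (σ k) k).hasFDerivAt).const_mul _

variable {n : ℕ}

theorem pd_eq_of_hasFDerivAt {f : (Fin n → ℝ) → ℝ} {f' : (Fin n → ℝ) →L[ℝ] ℝ}
    {x : Fin n → ℝ} (hf : HasFDerivAt f f' x) (i : Fin n) : pd i f x = f' (Pi.single i 1) := by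
  rw [pd, hf.fderiv]

theorem pd_adjugate_apply {A : (Fin n → ℝ) → Matrix (Fin n) (Fin n) ℝ} {x : Fin n → ℝ}
    (hA : ∀ p q, DifferentiableAt ℝ (fun y => A y p q) x) (r i j : Fin n) :
    pd r (fun y => (A y).adjugate i j) x =
      adjugateDeriv (A x) (of fun p q => pd r (fun y => A y p q) x) i j := by
  rw [pd_eq_of_hasFDerivAt (hasFDerivAt_adjugate_apply hA i j)]
  simp [adjugateDeriv, pd]

theorem sum_pd_adjugate_eq_zero {A : (Fin n → ℝ) → Matrix (Fin n) (Fin n) ℝ} {x : Fin n → ℝ}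
    (hA : ∀ p q, DifferentiableAt ℝ (fun y => A y p q) x)
    (hsymm : ∀ p q r, pd r (fun y => A y p q) x = pd q (fun y => A y p r) x) (j : Fin n) :
    ∑ i, pd i (fun y => (A y).adjugate i j) x = 0 := by
  simp_rw [pd_adjugate_apply hA]
  exact sum_adjugateDeriv_eq_zero _ _ (fun r p q => hsymm p q r) j

theorem pd_sum_mul {ι : Type*} (s : Finset ι) {f g : ι → (Fin n → ℝ) → ℝ} {x : Fin n → ℝ}
    (hf : ∀ j, DifferentiableAt ℝ (f j) x) (hg : ∀ j, DifferentiableAt ℝ (g j) x) (i : Fin n) :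
    pd i (fun y => ∑ j ∈ s, f j y * g j y) x =
      ∑ j ∈ s, (f j x * pd i (g j) x + g j x * pd i (f j) x) := by
  rw [pd, fderiv_fun_sum fun j _ => (hf j).fun_mul (hg j)]
  simp [pd, fderiv_fun_mul (hf _) (hg _)]

theorem sum_pd_adjugate_mul_eq_trace {A : (Fin n → ℝ) → Matrix (Fin n) (Fin n) ℝ}
    {u : (Fin n → ℝ) → Fin n → ℝ} {x : Fin n → ℝ}
    (hA : ∀ p q, DifferentiableAt ℝ (fun y => A y p q) x)
    (hsymm : ∀ p q r, pd r (fun y => A y p q) x = pd q (fun y => A y p r) x)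
    (hu : ∀ j, DifferentiableAt ℝ (fun y => u y j) x) :
    ∑ i, pd i (fun y => ∑ j, (A y).adjugate i j * u y j) x = trace ((A x).adjugate * jacM u x) := by
  have hadj : ∀ i j, DifferentiableAt ℝ (fun y => (A y).adjugate i j) x :=
    fun i j => (hasFDerivAt_adjugate_apply hA i j).differentiableAt
  simp_rw [pd_sum_mul _ (hadj _) hu, sum_add_distrib]
  rw [sum_comm (f := fun i j => u x j * _)]
  simp_rw [← mul_sum, sum_pd_adjugate_eq_zero hA hsymm, mul_zero, sum_const_zero, add_zero]
  simp [trace, mul_apply, jacM]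

open Set

theorem ContinuousOn.comp_prodMk_right {α β γ : Type*} [TopologicalSpace α] [TopologicalSpace β]
    [TopologicalSpace γ] {g : α × β → γ} {s : Set α} (hg : ContinuousOn g (s ×ˢ univ)) (y : β) :
    ContinuousOn (fun a => g (a, y)) s :=
  hg.comp (by fun_prop) fun _ ha => ⟨ha, trivial⟩

theorem continuousOn_clm_of_apply_single {α F : Type*} [TopologicalSpace α]
    [NormedAddCommGroup F] [NormedSpace ℝ F] {c : α → (Fin n → ℝ) →L[ℝ] F} {s : Set α}
    (h : ∀ l, ContinuousOn (fun a => c a (Pi.single l 1)) s) : ContinuousOn c s := by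
  refine continuousOn_clm_apply.2 fun y => ?_
  have hy : ∀ a, c a y = ∑ l, y l • c a (Pi.single l 1) := fun a => by
    conv_lhs => rw [← Finset.univ_sum_single y]
    refine (map_sum _ _ _).trans (sum_congr rfl fun l _ => ?_)
    rw [← map_smul, ← Pi.single_smul', smul_eq_mul, mul_one]
  simp_rw [hy]
  exact continuousOn_finsetSum _ fun l _ => continuousOn_const.smul (h l)

theorem hasFDerivAt_intervalIntegral_of_continuousOn {E F : Type*} [NormedAddCommGroup E]
    [NormedSpace ℝ E] [FiniteDimensional ℝ E] [NormedAddCommGroup F] [NormedSpace ℝ F]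
    {f : ℝ → E → F} {a b t : ℝ} (ht : t ∈ Icc a b)
    (hf : ContinuousOn (fun p : ℝ × E => f p.1 p.2) (Icc a b ×ˢ univ))
    (hdiff : ∀ τ ∈ Icc a b, Differentiable ℝ (f τ))
    (hf' : ContinuousOn (fun p : ℝ × E => fderiv ℝ (f p.1) p.2) (Icc a b ×ˢ univ)) (x : E) :
    HasFDerivAt (fun y => ∫ τ in a..t, f τ y) (∫ τ in a..t, fderiv ℝ (f τ) x) x := by
  have hIcc : uIcc a t ⊆ Icc a b := uIcc_subset_Icc (left_mem_Icc.2 (ht.1.trans ht.2)) ht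
  have hIoc : uIoc a t ⊆ Icc a b := uIoc_subset_uIcc.trans hIcc
  obtain ⟨C, hC⟩ := (isCompact_Icc.prod (isCompact_closedBall x 1)).exists_bound_of_continuousOn
    (hf'.mono (prod_mono subset_rfl (subset_univ _)))
  refine intervalIntegral.hasFDerivAt_integral_of_dominated_of_fderiv_le
    (F' := fun y τ => fderiv ℝ (f τ) y) (bound := fun _ => C) (Metric.ball_mem_nhds x one_pos)
    (Filter.Eventually.of_forall fun y => ?_) ?_ ?_ ?_
    (intervalIntegrable_const (μ := MeasureTheory.volume)) ?_
  · exact ((hf.comp_prodMk_right y).mono hIoc).aestronglyMeasurable measurableSet_uIoc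
  · exact ((hf.comp_prodMk_right x).mono hIcc).intervalIntegrable
  · exact ((hf'.comp_prodMk_right x).mono hIoc).aestronglyMeasurable measurableSet_uIoc
  · exact ae_of_all _ fun τ hτ y hy => hC (τ, y) ⟨hIoc hτ, Metric.ball_subset_closedBall hy⟩
  · exact ae_of_all _ fun τ hτ y _ => (hdiff τ (hIoc hτ) y).hasFDerivAt

theorem pd_intervalIntegral {f : ℝ → (Fin n → ℝ) → ℝ} {a b t : ℝ} (ht : t ∈ Icc a b)
    (hf : ContinuousOn (fun p : ℝ × (Fin n → ℝ) => f p.1 p.2) (Icc a b ×ˢ univ))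
    (hdiff : ∀ τ ∈ Icc a b, Differentiable ℝ (f τ))
    (hpd : ∀ l, ContinuousOn (fun p : ℝ × (Fin n → ℝ) => pd l (f p.1) p.2) (Icc a b ×ˢ univ))
    (x : Fin n → ℝ) (l : Fin n) :
    pd l (fun y => ∫ τ in a..t, f τ y) x = ∫ τ in a..t, pd l (f τ) x := by
  have hf' := continuousOn_clm_of_apply_single hpd
  have hIcc : uIcc a t ⊆ Icc a b := uIcc_subset_Icc (left_mem_Icc.2 (ht.1.trans ht.2)) ht
  rw [pd_eq_of_hasFDerivAt (hasFDerivAt_intervalIntegral_of_continuousOn ht hf hdiff hf' x),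
    ContinuousLinearMap.intervalIntegral_apply
      ((hf'.comp_prodMk_right x).mono hIcc).intervalIntegrable]
  rfl

theorem differentiable_jacM_apply {F : (Fin n → ℝ) → Fin n → ℝ} (hF : ContDiff ℝ 2 F)
    (p q : Fin n) : Differentiable ℝ (fun y => jacM F y p q) := by
  have hFp : ContDiff ℝ 1 (fderiv ℝ (fun y => F y p)) :=
    (contDiff_pi.1 hF p).fderiv_right (by norm_num)
  exact (hFp.clm_apply contDiff_const).differentiable one_ne_zero

theorem pd_jacM_comm {F : (Fin n → ℝ) → Fin n → ℝ} (hF : ContDiff ℝ 2 F) (x : Fin n → ℝ)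
    (p q r : Fin n) : pd r (fun y => jacM F y p q) x = pd q (fun y => jacM F y p r) x := by
  have hFp : ContDiff ℝ 2 (fun y => F y p) := contDiff_pi.1 hF p
  have hd : DifferentiableAt ℝ (fderiv ℝ (fun y => F y p)) x :=
    ((hFp.fderiv_right (m := 1) (by norm_num)).differentiable one_ne_zero) x
  have hsecond : ∀ u w, pd w (fun y => fderiv ℝ (fun z => F z p) y u) x =
      fderiv ℝ (fderiv ℝ (fun z => F z p)) x (Pi.single w 1) u := fun u w => by
    rw [pd, fderiv_clm_apply hd (differentiableAt_const u)]
    simp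
  change pd r (fun y => fderiv ℝ (fun z => F z p) y (Pi.single q 1)) x =
    pd q (fun y => fderiv ℝ (fun z => F z p) y (Pi.single r 1)) x
  rw [hsecond, hsecond]
  exact (hFp.contDiffAt.isSymmSndFDerivAt (by simp)) _ _

section LagrangianFlow

variable {v : ℝ → (Fin n → ℝ) → (Fin n → ℝ)} {T t : ℝ}

theorem lagFlow_apply (hv : ContinuousOn (fun p : ℝ × (Fin n → ℝ) => v p.1 p.2) (Icc 0 T ×ˢ univ))
    (ht : t ∈ Icc 0 T) (y : Fin n → ℝ) (i : Fin n) :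
    lagFlow v t y i = y i + ∫ τ in (0 : ℝ)..t, v τ y i := by
  have hIcc : uIcc 0 t ⊆ Icc 0 T := uIcc_subset_Icc (left_mem_Icc.2 (ht.1.trans ht.2)) ht
  have hint : IntervalIntegrable (fun τ => v τ y) MeasureTheory.volume 0 t :=
    ((hv.comp_prodMk_right y).mono hIcc).intervalIntegrable
  rw [lagFlow, Pi.add_apply]
  exact congrArg _
    ((ContinuousLinearMap.proj (R := ℝ) (φ := fun _ : Fin n => ℝ) i).intervalIntegral_comp_comm
      hint).symm

theorem jacM_lagFlow_apply
    (hv : ContinuousOn (fun p : ℝ × (Fin n → ℝ) => v p.1 p.2) (Icc 0 T ×ˢ univ))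
    (hv_diff : ∀ τ ∈ Icc 0 T, Differentiable ℝ (v τ))
    (hDv : ∀ i j, ContinuousOn (fun p : ℝ × (Fin n → ℝ) => jacM (v p.1) p.2 i j)
      (Icc 0 T ×ˢ univ))
    (ht : t ∈ Icc 0 T) (x : Fin n → ℝ) (i j : Fin n) :
    jacM (lagFlow v t) x i j =
      (1 : Matrix (Fin n) (Fin n) ℝ) i j + ∫ τ in (0 : ℝ)..t, jacM (v τ) x i j := by
  have hvi : ContinuousOn (fun p : ℝ × (Fin n → ℝ) => v p.1 p.2 i) (Icc 0 T ×ˢ univ) :=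
    (continuous_apply i).comp_continuousOn hv
  have hvi_diff : ∀ τ ∈ Icc 0 T, Differentiable ℝ (fun y => v τ y i) :=
    fun τ hτ => differentiable_pi.1 (hv_diff τ hτ) i
  have hflow : (fun y => lagFlow v t y i) = fun y => y i + ∫ τ in (0 : ℝ)..t, v τ y i :=
    funext fun y => lagFlow_apply hv ht y i
  have hint := hasFDerivAt_intervalIntegral_of_continuousOn ht hvi hvi_diff
    (continuousOn_clm_of_apply_single (hDv i)) x
  rw [jacM, of_apply, hflow, pd_eq_of_hasFDerivAt ((hasFDerivAt_apply i x).fun_add hint),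
    _root_.add_apply, ← pd_eq_of_hasFDerivAt hint,
    pd_intervalIntegral ht hvi hvi_diff (hDv i)]
  simp [one_apply, Pi.single_apply, jacM]

theorem hasDerivWithinAt_jacM_lagFlow
    (hv : ContinuousOn (fun p : ℝ × (Fin n → ℝ) => v p.1 p.2) (Icc 0 T ×ˢ univ))
    (hv_diff : ∀ τ ∈ Icc 0 T, Differentiable ℝ (v τ))
    (hDv : ∀ i j, ContinuousOn (fun p : ℝ × (Fin n → ℝ) => jacM (v p.1) p.2 i j)
      (Icc 0 T ×ˢ univ))
    (ht : t ∈ Icc 0 T) (x : Fin n → ℝ) (i j : Fin n) :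
    HasDerivWithinAt (fun s => jacM (lagFlow v s) x i j) (jacM (v t) x i j) (Icc 0 T) t := by
  have hslice : ContinuousOn (fun τ => jacM (v τ) x i j) (Icc 0 T) :=
    (hDv i j).comp_prodMk_right x
  have : Fact (t ∈ Icc 0 T) := ⟨ht⟩
  have hFTC : HasDerivWithinAt (fun s => ∫ τ in (0 : ℝ)..s, jacM (v τ) x i j) (jacM (v t) x i j)
      (Icc 0 T) t :=
    intervalIntegral.integral_hasDerivWithinAt_right
      (hslice.mono (uIcc_subset_Icc (left_mem_Icc.2 (ht.1.trans ht.2)) ht)).intervalIntegrable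
      (hslice.stronglyMeasurableAtFilter_nhdsWithin measurableSet_Icc t) (hslice t ht)
  exact (hFTC.const_add _).congr (fun s hs => jacM_lagFlow_apply hv hv_diff hDv hs x i j)
    (jacM_lagFlow_apply hv hv_diff hDv ht x i j)

theorem differentiableAt_jacM_lagFlow
    (hv : ContinuousOn (fun p : ℝ × (Fin n → ℝ) => v p.1 p.2) (Icc 0 T ×ˢ univ))
    (hv_x : ∀ τ ∈ Icc 0 T, ContDiff ℝ 2 (v τ))
    (hDv : ∀ i j, ContinuousOn (fun p : ℝ × (Fin n → ℝ) => jacM (v p.1) p.2 i j)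
      (Icc 0 T ×ˢ univ))
    (hD2v : ∀ i j l, ContinuousOn
      (fun p : ℝ × (Fin n → ℝ) => pd l (fun y => jacM (v p.1) y i j) p.2) (Icc 0 T ×ˢ univ))
    (ht : t ∈ Icc 0 T) (x : Fin n → ℝ) (p q : Fin n) :
    DifferentiableAt ℝ (fun y => jacM (lagFlow v t) y p q) x := by
  have hflow := funext fun y => jacM_lagFlow_apply hv
    (fun τ hτ => (hv_x τ hτ).differentiable (by norm_num)) hDv ht y p q
  rw [hflow]
  exact (differentiableAt_const _).add (hasFDerivAt_intervalIntegral_of_continuousOn ht (hDv p q)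
    (fun τ hτ => differentiable_jacM_apply (hv_x τ hτ) p q)
    (continuousOn_clm_of_apply_single (hD2v p q)) x).differentiableAt

theorem pd_jacM_lagFlow_comm
    (hv : ContinuousOn (fun p : ℝ × (Fin n → ℝ) => v p.1 p.2) (Icc 0 T ×ˢ univ))
    (hv_x : ∀ τ ∈ Icc 0 T, ContDiff ℝ 2 (v τ))
    (hDv : ∀ i j, ContinuousOn (fun p : ℝ × (Fin n → ℝ) => jacM (v p.1) p.2 i j)
      (Icc 0 T ×ˢ univ))
    (hD2v : ∀ i j l, ContinuousOn
      (fun p : ℝ × (Fin n → ℝ) => pd l (fun y => jacM (v p.1) y i j) p.2) (Icc 0 T ×ˢ univ))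
    (ht : t ∈ Icc 0 T) (x : Fin n → ℝ) (p q r : Fin n) :
    pd r (fun y => jacM (lagFlow v t) y p q) x = pd q (fun y => jacM (lagFlow v t) y p r) x := by
  have hpd : ∀ q r, pd r (fun y => jacM (lagFlow v t) y p q) x =
      ∫ τ in (0 : ℝ)..t, pd r (fun y => jacM (v τ) y p q) x := fun q r => by
    have hflow := funext fun y => jacM_lagFlow_apply hv
      (fun τ hτ => (hv_x τ hτ).differentiable (by norm_num)) hDv ht y p q
    rw [hflow, pd, fderiv_const_add, ← pd, pd_intervalIntegral ht (hDv p q)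
      (fun τ hτ => differentiable_jacM_apply (hv_x τ hτ) p q) (hD2v p q)]
  rw [hpd, hpd]
  refine intervalIntegral.integral_congr fun τ hτ => pd_jacM_comm (hv_x τ ?_) x p q r
  exact uIcc_subset_Icc (left_mem_Icc.2 (ht.1.trans ht.2)) ht hτ

end LagrangianFlow

theorem jacobian_time_derivative_general {n : ℕ} (T : ℝ)
    (v : ℝ → (Fin n → ℝ) → (Fin n → ℝ))
    (hv_cont : ContinuousOn (fun p : ℝ × (Fin n → ℝ) => v p.1 p.2)
      (Set.Icc 0 T ×ˢ Set.univ))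
    (hv_x : ∀ t ∈ Set.Icc (0 : ℝ) T, ContDiff ℝ 2 (v t))
    (hDv_cont : ∀ i j : Fin n, ContinuousOn
      (fun p : ℝ × (Fin n → ℝ) => jacM (v p.1) p.2 i j) (Set.Icc 0 T ×ˢ Set.univ))
    (hD2v_cont : ∀ i j l : Fin n, ContinuousOn
      (fun p : ℝ × (Fin n → ℝ) => pd l (fun y => jacM (v p.1) y i j) p.2)
      (Set.Icc 0 T ×ˢ Set.univ)) :
    (∀ t ∈ Set.Icc (0 : ℝ) T, ∀ x : Fin n → ℝ,
      HasDerivWithinAt (fun s => (jacM (lagFlow v s) x).det)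
        (∑ i, pd i (fun y => ∑ j, (jacM (lagFlow v t) y).adjugate i j * v t y j) x)
        (Set.Icc 0 T) t)
    ∧ ((∀ t ∈ Set.Icc (0 : ℝ) T, ∀ x : Fin n → ℝ,
          ∑ i, pd i (fun y => ∑ j, (jacM (lagFlow v t) y).adjugate i j * v t y j) x = 0) →
        ∀ t ∈ Set.Icc (0 : ℝ) T, ∀ x : Fin n → ℝ,
          (jacM (lagFlow v t) x).det = 1) := by
  have hv_diff : ∀ t ∈ Icc (0 : ℝ) T, Differentiable ℝ (v t) :=
    fun t ht => (hv_x t ht).differentiable (by norm_num)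
  have hderiv : ∀ t ∈ Icc (0 : ℝ) T, ∀ x, HasDerivWithinAt (fun s => (jacM (lagFlow v s) x).det)
      (∑ i, pd i (fun y => ∑ j, (jacM (lagFlow v t) y).adjugate i j * v t y j) x) (Icc 0 T) t := by
    intro t ht x
    rw [sum_pd_adjugate_mul_eq_trace
      (differentiableAt_jacM_lagFlow hv_cont hv_x hDv_cont hD2v_cont ht x)
      (pd_jacM_lagFlow_comm hv_cont hv_x hDv_cont hD2v_cont ht x)
      (fun j => differentiable_pi.1 (hv_diff t ht) j x)]
    exact HasDerivWithinAt.matrix_det (hasDerivWithinAt_jacM_lagFlow hv_cont hv_diff hDv_cont ht x)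
  refine ⟨hderiv, fun hdiv t ht x => ?_⟩
  have hderiv0 : ∀ s ∈ Icc (0 : ℝ) T,
      HasDerivWithinAt (fun s => (jacM (lagFlow v s) x).det) 0 (Icc 0 T) s :=
    fun s hs => hdiv s hs x ▸ hderiv s hs x
  have hconst := constant_of_has_deriv_right_zero
    (fun s hs => (hderiv0 s hs).continuousWithinAt)
    (fun s hs => (hderiv0 s (Ico_subset_Icc_self hs)).mono_of_mem_nhdsWithin
      (Icc_mem_nhdsGE_of_mem hs)) t ht
  have hinit : jacM (lagFlow v 0) x = 1 := by
    ext i j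
    rw [jacM_lagFlow_apply hv_cont hv_diff hDv_cont (left_mem_Icc.2 (ht.1.trans ht.2)),
      intervalIntegral.integral_same, add_zero]
  rw [hconst, hinit, det_one]

/-- the Jacobian determinant `J_v̄(t,x) = det DₓX_v̄(t,x)` of the
Lagrangian flow map satisfies `∂ₜJ_v̄ = div(adj(DₓX_v̄) v̄)`; hence if
`div(adj(DₓX_v̄) v̄) ≡ 0` then `J_v̄ ≡ 1`. -/
theorem jacobian_time_derivative {n : ℕ} (hn : 2 ≤ n) (T : ℝ) (hT : 0 < T)
    (v : ℝ → (Fin n → ℝ) → (Fin n → ℝ))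
    (hv_cont : ContinuousOn (fun p : ℝ × (Fin n → ℝ) => v p.1 p.2)
      (Set.Icc 0 T ×ˢ Set.univ))
    (hv_x : ∀ t ∈ Set.Icc (0 : ℝ) T, ContDiff ℝ 2 (v t))
    (hDv_cont : ∀ i j : Fin n, ContinuousOn
      (fun p : ℝ × (Fin n → ℝ) => jacM (v p.1) p.2 i j) (Set.Icc 0 T ×ˢ Set.univ))
    (hD2v_cont : ∀ i j l : Fin n, ContinuousOn
      (fun p : ℝ × (Fin n → ℝ) => pd l (fun y => jacM (v p.1) y i j) p.2)
      (Set.Icc 0 T ×ˢ Set.univ)) :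
    (∀ t ∈ Set.Icc (0 : ℝ) T, ∀ x : Fin n → ℝ,
      HasDerivWithinAt (fun s => (jacM (lagFlow v s) x).det)
        (∑ i, pd i (fun y => ∑ j, (jacM (lagFlow v t) y).adjugate i j * v t y j) x)
        (Set.Icc 0 T) t)
    ∧ ((∀ t ∈ Set.Icc (0 : ℝ) T, ∀ x : Fin n → ℝ,
          ∑ i, pd i (fun y => ∑ j, (jacM (lagFlow v t) y).adjugate i j * v t y j) x = 0) →
        ∀ t ∈ Set.Icc (0 : ℝ) T, ∀ x : Fin n → ℝ,
          (jacM (lagFlow v t) x).det = 1) :=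
  jacobian_time_derivative_general T v hv_cont hv_x hDv_cont hD2v_cont
end
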